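/- Assume (H1), (H2), (H3) and (H4)(2), and let γ ∈ (0, 2/L). Then ∫_{ℝ^d} f'(θ) dπ_γ(θ) = 0. -/

import Mathlib

open MeasureTheory ProbabilityTheory Filter Finset
open scoped ENNReal NNReal RealInnerProductSpace Topology

noncomputable section

namespace SGDFormal

/-- The state space `ℝ^d`. -/
abbrev Vec (d : ℕ) := EuclideanSpace ℝ (Fin d)

variable {d q : ℕ} {Ω : Type*} [MeasurableSpace Ω]

/-- The outer product `v wᵀ` as a continuous linear map, `(v wᵀ) x = ⟪w, x⟫ v`. -/
def outer (v : Vec q) (w : Vec d) : Vec d →L[ℝ] Vec q :=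
  (innerSL ℝ w).smulRight v

/-- The SGD iterates `θ_k^{(γ)}`, started at the deterministic point `θ0`:
`θ_{k+1} = θ_k - γ (f'(θ_k) + ε_{k+1}(θ_k))`. -/
def sgd (f' : Vec d → Vec d) (ε : ℕ → Vec d → Ω → Vec d) (γ : ℝ) (θ0 : Vec d) :
    ℕ → Ω → Vec d
  | 0 => fun _ => θ0
  | k + 1 => fun ω =>
      sgd f' ε γ θ0 k ω - γ • (f' (sgd f' ε γ θ0 k ω) + ε (k + 1) (sgd f' ε γ θ0 k ω) ω)

/-- The one-step Markov kernel of SGD: `R_γ(θ, ·)` is the law of `θ - γ(f'(θ) + ε_1(θ))`. -/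
def Rstep (P : Measure Ω) (f' : Vec d → Vec d) (ε : ℕ → Vec d → Ω → Vec d) (γ : ℝ)
    (θ : Vec d) : Measure (Vec d) :=
  P.map fun ω => θ - γ • (f' θ + ε 1 θ ω)

/-- The `k`-step kernel `R_γ^k`. -/
def Riter (P : Measure Ω) (f' : Vec d → Vec d) (ε : ℕ → Vec d → Ω → Vec d) (γ : ℝ) :
    ℕ → Vec d → Measure (Vec d)
  | 0 => fun θ => Measure.dirac θ
  | k + 1 => fun θ => (Riter P f' ε γ k θ).bind (Rstep P f' ε γ)

/-- `π` is a stationary (invariant) probability measure for the kernel `R_γ`. -/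
def IsStationary (P : Measure Ω) (f' : Vec d → Vec d) (ε : ℕ → Vec d → Ω → Vec d)
    (γ : ℝ) (π : Measure (Vec d)) : Prop :=
  π.bind (Rstep P f' ε γ) = π

/-- `π` has a finite second moment. -/
def FiniteSecondMoment (π : Measure (Vec d)) : Prop :=
  ∫⁻ θ, (‖θ‖₊ : ℝ≥0∞) ^ 2 ∂π < ⊤

/-- Squared Wasserstein distance of order 2 (as an infimum over couplings). -/
def W2sq (μ ν : Measure (Vec d)) : ℝ :=
  sInf {r : ℝ | ∃ ξ : Measure (Vec d × Vec d), IsProbabilityMeasure ξ ∧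
    ξ.map Prod.fst = μ ∧ ξ.map Prod.snd = ν ∧ r = ∫ p, ‖p.1 - p.2‖ ^ 2 ∂ξ}

/-- Poisson solution `ψ_γ(θ) = Σ_{i=0}^∞ (R_γ^i φ(θ) − π(φ))`. -/
def poisson {F : Type*} [NormedAddCommGroup F] [NormedSpace ℝ F]
    (P : Measure Ω) (f' : Vec d → Vec d) (ε : ℕ → Vec d → Ω → Vec d) (γ : ℝ)
    (π : Measure (Vec d)) (φ : Vec d → F) (θ : Vec d) : F :=
  ∑' i : ℕ, (∫ ϑ, φ ϑ ∂(Riter P f' ε γ i θ) - ∫ ϑ, φ ϑ ∂π)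

/-- Noise covariance `C(θ) = E[ε_1(θ)^{⊗2}]`. -/
def noiseCov (P : Measure Ω) (ε : ℕ → Vec d → Ω → Vec d) (θ : Vec d) :
    Vec d →L[ℝ] Vec d :=
  ∫ ω, outer (ε 1 θ ω) (ε 1 θ ω) ∂P

/-- (H1): `f` is strongly convex with constant `m`. -/
def StrongConvexC (f : Vec d → ℝ) (m : ℝ) : Prop :=
  ∀ θ₁ θ₂ : Vec d, ∀ t : ℝ, t ∈ Set.Icc (0 : ℝ) 1 →
    f (t • θ₁ + (1 - t) • θ₂) ≤
      t * f θ₁ + (1 - t) * f θ₂ - m / 2 * (t * (1 - t)) * ‖θ₁ - θ₂‖ ^ 2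

/-- (H2): `f` is `C^5`, with bounded 2nd–5th derivatives; `f'` is the gradient of `f`
and is `L`-Lipschitz. -/
def H2 (f : Vec d → ℝ) (f' : Vec d → Vec d) (L : ℝ) : Prop :=
  ContDiff ℝ 5 f ∧ (∀ θ, HasGradientAt f (f' θ) θ) ∧
    (∀ i : ℕ, 2 ≤ i → i ≤ 5 → ∃ B : ℝ, ∀ θ, ‖iteratedFDeriv ℝ i f θ‖ ≤ B) ∧
    ∀ θ₁ θ₂ : Vec d, ‖f' θ₁ - f' θ₂‖ ≤ L * ‖θ₁ - θ₂‖

/-- `θstar` is a (the) global minimizer of `f`. -/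
def IsMinimizer (f : Vec d → ℝ) (θstar : Vec d) : Prop :=
  ∀ θ, f θstar ≤ f θ

/-- (H3): `(ℱ_k)` is a filtration, `ε_{k+1}(θ)` is `ℱ_{k+1}`-measurable with zero conditional
expectation given `ℱ_k`, and the random fields `(ε_k)_{k ≥ 1}` are i.i.d. -/
def H3 (P : Measure Ω) (ℱ : ℕ → MeasurableSpace Ω) (ε : ℕ → Vec d → Ω → Vec d) : Prop :=
  (∀ k, ℱ k ≤ ℱ (k + 1)) ∧ (∀ k, ℱ k ≤ (inferInstance : MeasurableSpace Ω)) ∧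
    (∀ (k : ℕ) (θ : Vec d), Measurable[ℱ (k + 1)] (ε (k + 1) θ)) ∧
    (∀ (k : ℕ) (θ : Vec d), P[ε (k + 1) θ|ℱ k] =ᵐ[P] 0) ∧
    (iIndepFun (m := fun _ : ℕ => MeasurableSpace.pi)
      (fun (k : ℕ) (ω : Ω) (θ : Vec d) => ε (k + 1) θ ω) P) ∧
    ∀ j k : ℕ, IdentDistrib (fun (ω : Ω) (θ : Vec d) => ε (j + 1) θ ω)
      (fun (ω : Ω) (θ : Vec d) => ε (k + 1) θ ω) P P

/-- (H4)(p): a.s. `L`-co-coercivity of `f'_k = f' + ε_k` and a `p`-th moment bound `τ` on the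
noise at the optimum. -/
def H4 (P : Measure Ω) (f' : Vec d → Vec d) (ε : ℕ → Vec d → Ω → Vec d)
    (θstar : Vec d) (L : ℝ) (p : ℕ) (τ : ℝ) : Prop :=
  (∀ k : ℕ, 1 ≤ k → ∀ᵐ ω ∂P, ∀ θ η : Vec d,
      ‖(f' θ + ε k θ ω) - (f' η + ε k η ω)‖ ^ 2 ≤
        L * ⟪(f' θ + ε k θ ω) - (f' η + ε k η ω), θ - η⟫) ∧
    0 ≤ τ ∧ ∀ k : ℕ, 1 ≤ k →
      (∫⁻ ω, (‖ε k θstar ω‖₊ : ℝ≥0∞) ^ p ∂P) ≤ ENNReal.ofReal (τ ^ p)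

end SGDFormal

/-!
Stationarity of `π` tested against the identity gives `∫ θ dπ = ∫ (R_γ id)(θ) dπ`, and
`(R_γ id)(θ) = θ - γ f'(θ)` because the noise has mean zero. Hence `γ ∫ f' dπ = 0`.
All integrals involved are finite: `π` has a second moment, `f'` is Lipschitz, and `ε_1(θ)` is
integrable at every `θ` since it is square-integrable at `θ*` and `2L`-Lipschitz in `θ`.
-/

namespace MeasureTheory

lemma integral_eq_zero_of_condExp_ae_eq_zero {α E : Type*} [NormedAddCommGroup E]
    [NormedSpace ℝ E] [CompleteSpace E] {m m₀ : MeasurableSpace α} {μ : Measure[m₀] α}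
    (hm : m ≤ m₀) [SigmaFinite (μ.trim hm)] {f : α → E} (h : μ[f|m] =ᵐ[μ] 0) :
    ∫ a, f a ∂μ = 0 := by
  rw [← integral_condExp hm, integral_congr_ae h]
  simp

section Integrability

variable {α E F : Type*} [MeasurableSpace α] [NormedAddCommGroup E] [NormedAddCommGroup F]
  {μ : Measure α}

lemma memLp_two_of_lintegral_nnnorm_sq_lt_top {f : α → E} (hf : AEStronglyMeasurable f μ)
    (h : ∫⁻ a, (‖f a‖₊ : ℝ≥0∞) ^ 2 ∂μ < ⊤) : MemLp f 2 μ := by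
  refine ⟨hf, ?_⟩
  rw [eLpNorm_lt_top_iff_lintegral_rpow_enorm_lt_top two_ne_zero ENNReal.ofNat_ne_top]
  simpa [enorm_eq_nnnorm] using h

lemma _root_.LipschitzWith.integrable_comp [IsFiniteMeasure μ] {K : ℝ≥0} {g : E → F}
    (hg : LipschitzWith K g) {f : α → E} (hf : Integrable f μ) : Integrable (g ∘ f) μ := by
  refine Integrable.mono' ((integrable_const ‖g 0‖).add (hf.norm.const_mul K))
    (hg.continuous.comp_aestronglyMeasurable hf.1) (Eventually.of_forall fun a => ?_)
  calc ‖g (f a)‖ ≤ ‖g 0‖ + ‖g (f a) - g 0‖ := norm_le_insert' _ _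
    _ ≤ ‖g 0‖ + K * ‖f a‖ := by simpa using hg.norm_sub_le (f a) 0

end Integrability

namespace Measure

variable {α β E : Type*} [MeasurableSpace α] [MeasurableSpace β] [NormedAddCommGroup E]
  [NormedSpace ℝ E] {μ : Measure α}

/-- `Measure.bind` is `0` for a kernel that is not a.e.-measurable. -/
lemma aemeasurable_of_bind_ne_zero {κ : α → Measure β} (h : μ.bind κ ≠ 0) :
    AEMeasurable κ μ := by
  by_contra hκ
  exact h (by rw [Measure.bind, Measure.map_of_not_aemeasurable hκ, Measure.join_zero])

lemma integral_bind {κ : α → Measure β} (hκ : AEMeasurable κ μ) {f : β → E}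
    (hf : Integrable f (μ.bind κ)) : ∫ x, f x ∂(μ.bind κ) = ∫ a, ∫ x, f x ∂κ a ∂μ := by
  let K : Kernel α β := ⟨hκ.mk κ, hκ.measurable_mk⟩
  have hbind : μ.bind κ = (K ∘ₖ Kernel.const Unit μ) () := by
    rw [Kernel.comp_apply, Kernel.const_apply]
    exact Measure.bind_congr_right hκ.ae_eq_mk
  rw [hbind] at hf ⊢
  rw [Kernel.integral_comp hf, Kernel.const_apply]
  refine integral_congr_ae ?_
  filter_upwards [hκ.ae_eq_mk] with a ha
  rw [ha]
  rfl

lemma integral_eq_integral_integral_of_bind_eq_self [NeZero μ] {κ : α → Measure α}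
    (hμ : μ.bind κ = μ) {f : α → E} (hf : Integrable f μ) :
    ∫ x, f x ∂μ = ∫ a, ∫ x, f x ∂κ a ∂μ := by
  have hκ : AEMeasurable κ μ := aemeasurable_of_bind_ne_zero (hμ.symm ▸ NeZero.ne μ)
  conv_lhs => rw [← hμ]
  exact integral_bind hκ (hμ.symm ▸ hf)

end Measure

end MeasureTheory

lemma norm_le_mul_of_sq_le_mul_inner {E : Type*} [NormedAddCommGroup E] [InnerProductSpace ℝ E]
    {u v : E} {L : ℝ} (hL : 0 ≤ L) (h : ‖u‖ ^ 2 ≤ L * ⟪u, v⟫) : ‖u‖ ≤ L * ‖v‖ := by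
  have h' : ‖u‖ * ‖u‖ ≤ ‖u‖ * (L * ‖v‖) := by
    nlinarith [mul_le_mul_of_nonneg_left (real_inner_le_norm u v) hL]
  rcases (norm_nonneg u).eq_or_lt with hu | hu
  · rw [← hu]; positivity
  · exact le_of_mul_le_mul_left h' hu

namespace SGDFormal

section Noise

variable {d : ℕ} {Ω : Type*} [MeasurableSpace Ω] {P : Measure Ω} {ℱ : ℕ → MeasurableSpace Ω}
  {f : Vec d → ℝ} {f' : Vec d → Vec d} {ε : ℕ → Vec d → Ω → Vec d} {θstar : Vec d} {L τ : ℝ}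

lemma H2.lipschitzWith (h2 : H2 f f' L) : LipschitzWith L.toNNReal f' :=
  LipschitzWith.of_dist_le' fun x y => by simpa only [dist_eq_norm] using h2.2.2.2 x y

lemma H3.measurable (h3 : H3 P ℱ ε) (θ : Vec d) : Measurable (ε 1 θ) :=
  (h3.2.2.1 0 θ).mono (h3.2.1 1) le_rfl

lemma H3.integral_eq_zero [IsFiniteMeasure P] (h3 : H3 P ℱ ε) (θ : Vec d) :
    ∫ ω, ε 1 θ ω ∂P = 0 :=
  integral_eq_zero_of_condExp_ae_eq_zero (h3.2.1 0) (h3.2.2.2.1 0 θ)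

/-- `ε_1(·, ω) = f'_1 - f'` is a difference of two `L`-Lipschitz maps, the first one by
co-coercivity. -/
lemma norm_noise_sub_le (hL : 0 ≤ L) (h2 : H2 f f' L) (h4 : H4 P f' ε θstar L 2 τ)
    (θ η : Vec d) : ∀ᵐ ω ∂P, ‖ε 1 θ ω - ε 1 η ω‖ ≤ 2 * L * ‖θ - η‖ := by
  filter_upwards [h4.1 1 le_rfl] with ω hω
  have hsum := norm_le_mul_of_sq_le_mul_inner hL (hω θ η)
  have hf' := h2.2.2.2 θ η
  calc ‖ε 1 θ ω - ε 1 η ω‖ = ‖((f' θ + ε 1 θ ω) - (f' η + ε 1 η ω)) - (f' θ - f' η)‖ := by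
        congr 1; abel
    _ ≤ ‖(f' θ + ε 1 θ ω) - (f' η + ε 1 η ω)‖ + ‖f' θ - f' η‖ := norm_sub_le _ _
    _ ≤ 2 * L * ‖θ - η‖ := by linarith

lemma integrable_noise [IsFiniteMeasure P] (hL : 0 ≤ L) (h2 : H2 f f' L) (h3 : H3 P ℱ ε)
    (h4 : H4 P f' ε θstar L 2 τ) (θ : Vec d) : Integrable (ε 1 θ) P := by
  have hstar : Integrable (ε 1 θstar) P :=
    (memLp_two_of_lintegral_nnnorm_sq_lt_top (h3.measurable θstar).aestronglyMeasurable
      ((h4.2.2 1 le_rfl).trans_lt ENNReal.ofReal_lt_top)).integrable one_le_two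
  have hdiff : Integrable (fun ω => ε 1 θ ω - ε 1 θstar ω) P :=
    Integrable.mono' (integrable_const (2 * L * ‖θ - θstar‖))
      ((h3.measurable θ).sub (h3.measurable θstar)).aestronglyMeasurable
      (norm_noise_sub_le hL h2 h4 θ θstar)
  exact (hdiff.add hstar).congr (.of_forall fun ω => by simp)

lemma integral_id_rstep [IsProbabilityMeasure P] {γ : ℝ} {θ : Vec d}
    (hint : Integrable (ε 1 θ) P) (hmean : ∫ ω, ε 1 θ ω ∂P = 0) :
    ∫ x, x ∂(Rstep P f' ε γ θ) = θ - γ • f' θ := by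
  have hgrad : Integrable (fun ω => f' θ + ε 1 θ ω) P := (integrable_const _).add hint
  have hstep : Integrable (fun ω => γ • (f' θ + ε 1 θ ω)) P := hgrad.smul γ
  rw [Rstep, integral_map (f := fun x => x) (hstep.aemeasurable.const_sub θ)
      aestronglyMeasurable_id,
    integral_sub (integrable_const θ) hstep, integral_smul, integral_add (integrable_const _) hint,
    hmean]
  simp

end Noise

theorem integral_gradient_stationary_eq_zero_general
    {d : ℕ} {Ω : Type*} [MeasurableSpace Ω]
    (P : Measure Ω) [IsProbabilityMeasure P] (ℱ : ℕ → MeasurableSpace Ω)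
    (f : Vec d → ℝ) (f' : Vec d → Vec d) (ε : ℕ → Vec d → Ω → Vec d)
    (θstar : Vec d) (L τ : ℝ) (hL : 0 < L)
    (h2 : H2 f f' L)
    (h3 : H3 P ℱ ε) (h4 : H4 P f' ε θstar L 2 τ)
    (γ : ℝ) (hγ : γ ∈ Set.Ioo (0 : ℝ) (2 / L))
    (π : Measure (Vec d)) (hπ : IsProbabilityMeasure π) (hπ2 : FiniteSecondMoment π)
    (hπstat : IsStationary P f' ε γ π) :
    ∫ ϑ, f' ϑ ∂π = 0 := by
  have hmean (θ : Vec d) : ∫ x, x ∂(Rstep P f' ε γ θ) = θ - γ • f' θ :=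
    integral_id_rstep (integrable_noise hL.le h2 h3 h4 θ) (h3.integral_eq_zero θ)
  have hid : Integrable (fun θ => θ) π :=
    (memLp_two_of_lintegral_nnnorm_sq_lt_top aestronglyMeasurable_id hπ2).integrable one_le_two
  have hdrift : Integrable (fun θ => γ • f' θ) π := (h2.lipschitzWith.integrable_comp hid).smul γ
  have hstat := Measure.integral_eq_integral_integral_of_bind_eq_self hπstat hid
  simp_rw [hmean, integral_sub hid hdrift, integral_smul] at hstat
  exact (smul_eq_zero.1 (sub_eq_self.1 hstat.symm)).resolve_left hγ.1.ne'

/-- Lemma 12: the mean of the gradient under the stationary distribution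
vanishes. -/
theorem integral_gradient_stationary_eq_zero
    {d : ℕ} {Ω : Type*} [MeasurableSpace Ω]
    (P : Measure Ω) [IsProbabilityMeasure P] (ℱ : ℕ → MeasurableSpace Ω)
    (f : Vec d → ℝ) (f' : Vec d → Vec d) (ε : ℕ → Vec d → Ω → Vec d)
    (θstar : Vec d) (m L τ : ℝ) (hm : 0 < m) (hL : 0 < L)
    (h1 : StrongConvexC f m) (h2 : H2 f f' L) (hmin : IsMinimizer f θstar)
    (h3 : H3 P ℱ ε) (h4 : H4 P f' ε θstar L 2 τ)
    (γ : ℝ) (hγ : γ ∈ Set.Ioo (0 : ℝ) (2 / L))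
    (π : Measure (Vec d)) (hπ : IsProbabilityMeasure π) (hπ2 : FiniteSecondMoment π)
    (hπstat : IsStationary P f' ε γ π) :
    ∫ ϑ, f' ϑ ∂π = 0 :=
  integral_gradient_stationary_eq_zero_general P ℱ f f' ε θstar L τ hL h2 h3 h4 γ hγ π hπ hπ2 hπstat

end SGDFormal
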